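/- arXiv:2405.19698 — 7 statements merged into one kernel-verified Lean document; each statement's English description precedes it below -/
import Mathlib

section
/- Let H be a complex Hilbert space, x, y ∈ H, and c > 0. Then |⟨x, y⟩|² ≤ (c/(2(1+c)))·‖x‖²‖y‖² + ((2+c)/(2(1+c)))·|⟨x, y⟩|·‖x‖‖y‖, and this upper bound is at most ‖x‖²‖y‖². -/
open scoped InnerProductSpace
open ContinuousLinearMap Finset

variable {H : Type*} [NormedAddCommGroup H] [InnerProductSpace ℂ H] [CompleteSpace H]

/-- The numerical radius of a bounded operator. -/
noncomputable def numRadius (T : H →L[ℂ] H) : ℝ :=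
  sSup ((fun x : H => ‖⟪T x, x⟫_ℂ‖) '' {x : H | ‖x‖ = 1})

/-- The absolute value |T| = (T*T)^(1/2). -/
noncomputable def opAbs (T : H →L[ℂ] H) : H →L[ℂ] H :=
  CFC.sqrt (ContinuousLinearMap.adjoint T * T)

/-- Real power of a (positive) operator via continuous functional calculus. -/
noncomputable def opPow (T : H →L[ℂ] H) (r : ℝ) : H →L[ℂ] H :=
  CFC.rpow T r

theorem stmt3 (x y : H) (c : ℝ) (hc : 0 < c) :
    ‖⟪x, y⟫_ℂ‖ ^ 2 ≤ c / (2 * (1 + c)) * (‖x‖ ^ 2 * ‖y‖ ^ 2)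
        + (2 + c) / (2 * (1 + c)) * (‖⟪x, y⟫_ℂ‖ * (‖x‖ * ‖y‖)) ∧
    c / (2 * (1 + c)) * (‖x‖ ^ 2 * ‖y‖ ^ 2)
        + (2 + c) / (2 * (1 + c)) * (‖⟪x, y⟫_ℂ‖ * (‖x‖ * ‖y‖))
      ≤ ‖x‖ ^ 2 * ‖y‖ ^ 2 := by
  have hcs : ‖⟪x, y⟫_ℂ‖ ≤ ‖x‖ * ‖y‖ := norm_inner_le_norm x y
  have ha : 0 ≤ ‖⟪x, y⟫_ℂ‖ := norm_nonneg _
  have hpos : (0:ℝ) < 2 * (1 + c) := by linarith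
  set a := ‖⟪x, y⟫_ℂ‖
  set b := ‖x‖ * ‖y‖
  have hb : 0 ≤ b := le_trans ha hcs
  have hbb : ‖x‖ ^ 2 * ‖y‖ ^ 2 = b ^ 2 := by ring
  constructor
  · rw [hbb, div_mul_eq_mul_div, div_mul_eq_mul_div, ← add_div,
      le_div_iff₀ hpos]
    nlinarith [mul_le_mul_of_nonneg_left hcs ha, mul_le_mul_of_nonneg_right hcs hb]
  · rw [hbb, div_mul_eq_mul_div, div_mul_eq_mul_div, ← add_div,
      div_le_iff₀ hpos]
    nlinarith [mul_le_mul_of_nonneg_right hcs hb]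
end

section
/- Let H be a complex Hilbert space and x, y, e ∈ H with ‖e‖ = 1. Then |⟨x, e⟩·⟨e, y⟩| ≤ (1/2)·(‖x‖‖y‖ + |⟨x, y⟩|). (Buzano's inequality.) -/
open scoped InnerProductSpace
open ContinuousLinearMap Finset

variable {H : Type*} [NormedAddCommGroup H] [InnerProductSpace ℂ H] [CompleteSpace H]

theorem stmt4 (x y e : H) (he : ‖e‖ = 1) :
    ‖⟪x, e⟫_ℂ * ⟪e, y⟫_ℂ‖ ≤ (1 / 2) * (‖x‖ * ‖y‖ + ‖⟪x, y⟫_ℂ‖) := by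
  set z := (2 * ⟪e, y⟫_ℂ) • e - y with hz
  have hzy : ⟪x, z⟫_ℂ = 2 * ⟪e, y⟫_ℂ * ⟪x, e⟫_ℂ - ⟪x, y⟫_ℂ := by
    simp [hz, inner_sub_right, inner_smul_right]
  have hnz : ‖z‖ = ‖y‖ := by
    have h1 : ‖z‖ ^ 2 = ‖y‖ ^ 2 := by
      rw [hz, @norm_sub_sq ℂ]
      rw [norm_smul, inner_smul_left]
      simp only [map_mul, Complex.conj_ofNat, mul_assoc]
      rw [Complex.conj_mul']
      push_cast
      simp [he, Complex.sq_norm]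
      rw [← Complex.ofReal_pow, Complex.ofReal_re]
      ring
    have := congrArg Real.sqrt h1
    simpa [Real.sqrt_sq, norm_nonneg] using this
  have key : ⟪x, e⟫_ℂ * ⟪e, y⟫_ℂ = (⟪x, z⟫_ℂ + ⟪x, y⟫_ℂ) / 2 := by
    rw [hzy]; ring
  rw [key]
  have h2 : ‖(⟪x, z⟫_ℂ + ⟪x, y⟫_ℂ) / 2‖ ≤ (‖⟪x, z⟫_ℂ‖ + ‖⟪x, y⟫_ℂ‖) / 2 := by
    rw [norm_div]
    simp only [Complex.norm_ofNat]
    gcongr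
    exact norm_add_le _ _
  have h3 : ‖⟪x, z⟫_ℂ‖ ≤ ‖x‖ * ‖y‖ := by
    calc ‖⟪x, z⟫_ℂ‖ ≤ ‖x‖ * ‖z‖ := norm_inner_le_norm x z
    _ = ‖x‖ * ‖y‖ := by rw [hnz]
  linarith
end

section
/- Let H be a complex Hilbert space, x, y, e ∈ H with ‖e‖ = 1, and c > 0. Then |⟨x, e⟩·⟨e, y⟩|² ≤ ((2+3c)/(8(1+c)))·‖x‖²‖y‖² + ((6+5c)/(8(1+c)))·‖x‖‖y‖·|⟨x, y⟩|. -/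
open scoped InnerProductSpace
open ContinuousLinearMap Finset

variable {H : Type*} [NormedAddCommGroup H] [InnerProductSpace ℂ H] [CompleteSpace H]

/-- Buzano's inequality. -/
lemma buzano_aux (x y e : H) (he : ‖e‖ = 1) :
    2 * ‖⟪x, e⟫_ℂ * ⟪e, y⟫_ℂ‖ ≤ ‖x‖ * ‖y‖ + ‖⟪x, y⟫_ℂ‖ := by
  set z : H := ((2:ℂ) * ⟪e, y⟫_ℂ) • e - y with hz
  have h1 : ⟪x, z⟫_ℂ = 2 * ⟪x, e⟫_ℂ * ⟪e, y⟫_ℂ - ⟪x, y⟫_ℂ := by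
    simp [hz, inner_sub_right, inner_smul_right]; ring
  have h2sq : ‖z‖ ^ 2 = ‖y‖ ^ 2 := by
    have h := norm_sub_sq (𝕜 := ℂ) (((2:ℂ) * ⟪e, y⟫_ℂ) • e) y
    have hre : RCLike.re ⟪((2:ℂ) * ⟪e, y⟫_ℂ) • e, y⟫_ℂ = 2 * ‖⟪e, y⟫_ℂ‖ ^ 2 := by
      rw [inner_smul_left]
      have hw : (starRingEnd ℂ) (2 * ⟪e, y⟫_ℂ) * ⟪e, y⟫_ℂ
          = ((2 * ‖⟪e, y⟫_ℂ‖ ^ 2 : ℝ) : ℂ) := by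
        rw [map_mul, mul_assoc, RCLike.conj_mul]
        push_cast
        norm_num [Complex.conj_ofNat]
      rw [hw]
      exact Complex.ofReal_re _
    rw [hre] at h
    rw [hz]
    rw [h, norm_smul]
    simp [he]
    ring
  have h2 : ‖z‖ = ‖y‖ := by
    nlinarith [norm_nonneg z, norm_nonneg y]
  have key : (2:ℂ) * (⟪x, e⟫_ℂ * ⟪e, y⟫_ℂ) = ⟪x, z⟫_ℂ + ⟪x, y⟫_ℂ := by
    rw [h1]; ring
  calc 2 * ‖⟪x, e⟫_ℂ * ⟪e, y⟫_ℂ‖ = ‖(2:ℂ) * (⟪x, e⟫_ℂ * ⟪e, y⟫_ℂ)‖ := by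
        rw [norm_mul]; norm_num
    _ = ‖⟪x, z⟫_ℂ + ⟪x, y⟫_ℂ‖ := by rw [key]
    _ ≤ ‖⟪x, z⟫_ℂ‖ + ‖⟪x, y⟫_ℂ‖ := norm_add_le _ _
    _ ≤ ‖x‖ * ‖z‖ + ‖⟪x, y⟫_ℂ‖ := by gcongr; exact norm_inner_le_norm _ _
    _ = ‖x‖ * ‖y‖ + ‖⟪x, y⟫_ℂ‖ := by rw [h2]

theorem stmt5 (x y e : H) (he : ‖e‖ = 1) (c : ℝ) (hc : 0 < c) :
    ‖⟪x, e⟫_ℂ * ⟪e, y⟫_ℂ‖ ^ 2 ≤ (2 + 3 * c) / (8 * (1 + c)) * (‖x‖ ^ 2 * ‖y‖ ^ 2)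
      + (6 + 5 * c) / (8 * (1 + c)) * (‖x‖ * ‖y‖ * ‖⟪x, y⟫_ℂ‖) := by
  set a := ‖⟪x, e⟫_ℂ * ⟪e, y⟫_ℂ‖ with ha
  set B := ‖x‖ * ‖y‖ with hBdef
  set I := ‖⟪x, y⟫_ℂ‖ with hIdef
  have hB : 2 * a ≤ B + I := buzano_aux x y e he
  have hI : I ≤ B := norm_inner_le_norm _ _
  have ha0 : 0 ≤ a := norm_nonneg _
  have hI0 : 0 ≤ I := norm_nonneg _
  have hB0 : 0 ≤ B := by positivity
  have h8 : (0:ℝ) < 8 * (1 + c) := by linarith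
  have hBx : ‖x‖ ^ 2 * ‖y‖ ^ 2 = B ^ 2 := by rw [hBdef]; ring
  rw [hBx, div_mul_eq_mul_div, div_mul_eq_mul_div, ← add_div, le_div_iff₀ h8]
  nlinarith [mul_nonneg hc.le (mul_nonneg (sub_nonneg.2 hI) hB0),
    mul_nonneg (mul_nonneg (by linarith : (0:ℝ) ≤ 2 + c) (sub_nonneg.2 hI)) hI0,
    mul_nonneg (sub_nonneg.2 hB) (by linarith : (0:ℝ) ≤ B + I + 2 * a),
    mul_nonneg hc.le (mul_nonneg (sub_nonneg.2 hB) (by linarith : (0:ℝ) ≤ B + I + 2 * a))]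
end

section
/- Let H be a complex Hilbert space, x, y, e ∈ H with ‖e‖ = 1, and c > 0. Then |⟨x, e⟩·⟨e, y⟩|² ≤ (c/(4(1+c)))·(‖x‖²‖y‖² + |⟨x, y⟩|² + 2‖x‖‖y‖·|⟨x, y⟩|) + (1/(2(1+c)))·|⟨x, e⟩·⟨e, y⟩|·(‖x‖‖y‖ + |⟨x, y⟩|). -/
open scoped InnerProductSpace
open ContinuousLinearMap Finset

variable {H : Type*} [NormedAddCommGroup H] [InnerProductSpace ℂ H] [CompleteSpace H]

theorem stmt6 (x y e : H) (he : ‖e‖ = 1) (c : ℝ) (hc : 0 < c) :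
    ‖⟪x, e⟫_ℂ * ⟪e, y⟫_ℂ‖ ^ 2
      ≤ c / (4 * (1 + c)) * (‖x‖ ^ 2 * ‖y‖ ^ 2 + ‖⟪x, y⟫_ℂ‖ ^ 2
            + 2 * (‖x‖ * ‖y‖ * ‖⟪x, y⟫_ℂ‖))
        + 1 / (2 * (1 + c)) * (‖⟪x, e⟫_ℂ * ⟪e, y⟫_ℂ‖ * (‖x‖ * ‖y‖ + ‖⟪x, y⟫_ℂ‖)) := by
  have hb := buzano_aux x y e he
  set a := ‖⟪x, e⟫_ℂ * ⟪e, y⟫_ℂ‖ with ha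
  set s := ‖x‖ * ‖y‖ + ‖⟪x, y⟫_ℂ‖ with hs
  have ha0 : 0 ≤ a := norm_nonneg _
  have hkey : ‖x‖ ^ 2 * ‖y‖ ^ 2 + ‖⟪x, y⟫_ℂ‖ ^ 2 + 2 * (‖x‖ * ‖y‖ * ‖⟪x, y⟫_ℂ‖) = s ^ 2 := by
    rw [hs]; ring
  rw [hkey]
  have h1c : 0 < 1 + c := by linarith
  rw [div_mul_eq_mul_div, div_mul_eq_mul_div, div_add_div _ _ (by positivity) (by positivity),
    le_div_iff₀ (by positivity)]
  have hs0 : (0:ℝ) ≤ s := le_trans (by linarith) hb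
  have h1 : 4 * c * a ^ 2 ≤ c * s ^ 2 := by
    nlinarith [mul_nonneg (sub_nonneg.2 hb) (by linarith : (0:ℝ) ≤ s + 2 * a)]
  have h2 : 2 * a ^ 2 ≤ a * s := by nlinarith [mul_le_mul_of_nonneg_left hb ha0]
  nlinarith [mul_le_mul_of_nonneg_left h1 (by positivity : (0:ℝ) ≤ 2 * (1 + c)),
    mul_le_mul_of_nonneg_left h2 (by positivity : (0:ℝ) ≤ 4 * (1 + c))]
end

section
/- Let H be a complex Hilbert space, x, y, e ∈ H with ‖e‖ = 1, let n ≥ 1 be a natural number, and c > 0. Then |⟨x, e⟩·⟨e, y⟩|^{2n} ≤ (1/2^{2n})·((1+2c)/(1+c))·‖x‖^{2n}‖y‖^{2n} + (1/(2^{2n}(1+c)))·‖x‖ⁿ‖y‖ⁿ·|⟨x, y⟩|ⁿ + (1/2^{2n})·Σ_{r=1}^{2n−1} C(2n, r)·‖x‖ʳ‖y‖ʳ·|⟨x, y⟩|^{2n−r}. -/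
open scoped InnerProductSpace
open ContinuousLinearMap Finset

variable {H : Type*} [NormedAddCommGroup H] [InnerProductSpace ℂ H] [CompleteSpace H]

/-- Buzano's inequality. -/
lemma buzano (x y e : H) (he : ‖e‖ = 1) :
    ‖⟪x, e⟫_ℂ * ⟪e, y⟫_ℂ‖ ≤ (‖x‖ * ‖y‖ + ‖⟪x, y⟫_ℂ‖) / 2 := by
  set u : H := (2 * ⟪e, y⟫_ℂ) • e - y with hu
  have key : (2 : ℂ) * (⟪x, e⟫_ℂ * ⟪e, y⟫_ℂ) = ⟪x, u⟫_ℂ + ⟪x, y⟫_ℂ := by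
    simp [hu, inner_sub_right, inner_smul_right]
    ring
  have hnorm : ‖u‖ = ‖y‖ := by
    have h1 : ‖u‖ ^ 2 = ‖y‖ ^ 2 := by
      rw [hu, @norm_sub_sq ℂ, norm_smul, inner_smul_left, he, mul_one]
      have hz : RCLike.re ((starRingEnd ℂ) (2 * ⟪e, y⟫_ℂ) * ⟪e, y⟫_ℂ)
          = 2 * ‖⟪e, y⟫_ℂ‖ ^ 2 := by
        rw [show (starRingEnd ℂ) (2 * ⟪e, y⟫_ℂ) = 2 * (starRingEnd ℂ) ⟪e, y⟫_ℂ
          from by rw [map_mul, Complex.conj_ofNat], mul_assoc,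
          mul_comm ((starRingEnd ℂ) ⟪e, y⟫_ℂ) ⟪e, y⟫_ℂ,
          Complex.mul_conj]
        simp [Complex.normSq_eq_norm_sq, ← Complex.ofReal_pow]
      rw [hz, norm_mul]
      simp
      ring
    have h2 : Real.sqrt (‖u‖ ^ 2) = Real.sqrt (‖y‖ ^ 2) := by rw [h1]
    simpa [Real.sqrt_sq, norm_nonneg] using h2
  have h2 : 2 * ‖⟪x, e⟫_ℂ * ⟪e, y⟫_ℂ‖ ≤ ‖x‖ * ‖y‖ + ‖⟪x, y⟫_ℂ‖ := by
    calc 2 * ‖⟪x, e⟫_ℂ * ⟪e, y⟫_ℂ‖ = ‖(2 : ℂ) * (⟪x, e⟫_ℂ * ⟪e, y⟫_ℂ)‖ := by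
          rw [norm_mul]; norm_num
      _ = ‖⟪x, u⟫_ℂ + ⟪x, y⟫_ℂ‖ := by rw [key]
      _ ≤ ‖⟪x, u⟫_ℂ‖ + ‖⟪x, y⟫_ℂ‖ := norm_add_le _ _
      _ ≤ ‖x‖ * ‖u‖ + ‖⟪x, y⟫_ℂ‖ := by gcongr; exact norm_inner_le_norm x u
      _ = ‖x‖ * ‖y‖ + ‖⟪x, y⟫_ℂ‖ := by rw [hnorm]
  linarith

lemma arith_aux (A B b2 S : ℝ) (k : ℕ) (c : ℝ) (hc : 0 < c)
    (h1 : b2 ≤ B) (h2 : B ≤ A) :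
    (1 / 2 ^ k) * (b2 + S + A)
      ≤ (1 / 2 ^ k) * ((1 + 2 * c) / (1 + c)) * A + (1 / (2 ^ k * (1 + c))) * B
        + (1 / 2 ^ k) * S := by
  have h1c : (0 : ℝ) < 1 + c := by linarith
  have h2k : (0 : ℝ) < 2 ^ k := by positivity
  have expand : (1 / 2 ^ k) * ((1 + 2 * c) / (1 + c)) * A + (1 / (2 ^ k * (1 + c))) * B
        + (1 / 2 ^ k) * S - (1 / 2 ^ k) * (b2 + S + A)
      = (1 / (2 ^ k * (1 + c))) * (((1 + 2 * c) * A + B) - (1 + c) * (b2 + A)) := by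
    field_simp
    ring
  have hpos : (0 : ℝ) ≤ 1 / (2 ^ k * (1 + c)) := by positivity
  have hkey : 0 ≤ ((1 + 2 * c) * A + B) - (1 + c) * (b2 + A) := by nlinarith
  nlinarith [mul_nonneg hpos hkey, expand]

theorem stmt7 (x y e : H) (he : ‖e‖ = 1) (n : ℕ) (hn : 1 ≤ n) (c : ℝ) (hc : 0 < c) :
    ‖⟪x, e⟫_ℂ * ⟪e, y⟫_ℂ‖ ^ (2 * n)
      ≤ (1 / 2 ^ (2 * n)) * ((1 + 2 * c) / (1 + c)) * (‖x‖ ^ (2 * n) * ‖y‖ ^ (2 * n))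
        + (1 / (2 ^ (2 * n) * (1 + c))) * (‖x‖ ^ n * ‖y‖ ^ n * ‖⟪x, y⟫_ℂ‖ ^ n)
        + (1 / 2 ^ (2 * n)) * ∑ r ∈ Finset.Ico 1 (2 * n),
            (Nat.choose (2 * n) r : ℝ) * (‖x‖ ^ r * ‖y‖ ^ r * ‖⟪x, y⟫_ℂ‖ ^ (2 * n - r)) := by
  have hba : ‖⟪x, y⟫_ℂ‖ ≤ ‖x‖ * ‖y‖ := norm_inner_le_norm x y
  have hb : (0 : ℝ) ≤ ‖⟪x, y⟫_ℂ‖ := norm_nonneg _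
  have hbn : ‖⟪x, y⟫_ℂ‖ ^ n ≤ ‖x‖ ^ n * ‖y‖ ^ n := by
    rw [← mul_pow]; exact pow_le_pow_left₀ hb hba n
  have hbnn : (0 : ℝ) ≤ ‖⟪x, y⟫_ℂ‖ ^ n := by positivity
  have split : ∑ r ∈ Finset.range (2 * n + 1),
        (‖x‖ * ‖y‖) ^ r * ‖⟪x, y⟫_ℂ‖ ^ (2 * n - r) * ((2 * n).choose r : ℝ)
      = ‖⟪x, y⟫_ℂ‖ ^ (2 * n)
        + (∑ r ∈ Finset.Ico 1 (2 * n),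
            ((2 * n).choose r : ℝ) * (‖x‖ ^ r * ‖y‖ ^ r * ‖⟪x, y⟫_ℂ‖ ^ (2 * n - r)))
        + ‖x‖ ^ (2 * n) * ‖y‖ ^ (2 * n) := by
    rw [Finset.range_eq_Ico, Finset.sum_eq_sum_Ico_succ_bot (by omega : 0 < 2 * n + 1),
      Finset.sum_Ico_succ_top (by omega : 1 ≤ 2 * n),
      Finset.sum_congr rfl (fun r _ => by rw [mul_pow]; ring :
        ∀ r ∈ Finset.Ico 1 (2 * n),
          (‖x‖ * ‖y‖) ^ r * ‖⟪x, y⟫_ℂ‖ ^ (2 * n - r) * ((2 * n).choose r : ℝ)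
            = ((2 * n).choose r : ℝ) * (‖x‖ ^ r * ‖y‖ ^ r * ‖⟪x, y⟫_ℂ‖ ^ (2 * n - r)))]
    simp [mul_pow]
    ring
  have key : ‖⟪x, e⟫_ℂ * ⟪e, y⟫_ℂ‖ ^ (2 * n)
      ≤ (1 / 2 ^ (2 * n)) * (‖⟪x, y⟫_ℂ‖ ^ (2 * n)
        + (∑ r ∈ Finset.Ico 1 (2 * n),
            ((2 * n).choose r : ℝ) * (‖x‖ ^ r * ‖y‖ ^ r * ‖⟪x, y⟫_ℂ‖ ^ (2 * n - r)))
        + ‖x‖ ^ (2 * n) * ‖y‖ ^ (2 * n)) := by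
    calc ‖⟪x, e⟫_ℂ * ⟪e, y⟫_ℂ‖ ^ (2 * n)
        ≤ ((‖x‖ * ‖y‖ + ‖⟪x, y⟫_ℂ‖) / 2) ^ (2 * n) :=
          pow_le_pow_left₀ (norm_nonneg _) (buzano x y e he) _
      _ = (1 / 2 ^ (2 * n)) * ∑ r ∈ Finset.range (2 * n + 1),
            (‖x‖ * ‖y‖) ^ r * ‖⟪x, y⟫_ℂ‖ ^ (2 * n - r) * ((2 * n).choose r : ℝ) := by
          rw [div_pow, add_pow]; ring
      _ = _ := by rw [split]
  have hA : ‖⟪x, y⟫_ℂ‖ ^ (2 * n) ≤ ‖x‖ ^ n * ‖y‖ ^ n * ‖⟪x, y⟫_ℂ‖ ^ n := by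
    rw [two_mul, pow_add]
    exact mul_le_mul_of_nonneg_right hbn hbnn
  have hB : ‖x‖ ^ n * ‖y‖ ^ n * ‖⟪x, y⟫_ℂ‖ ^ n ≤ ‖x‖ ^ (2 * n) * ‖y‖ ^ (2 * n) := by
    have h1 : ‖x‖ ^ (2 * n) * ‖y‖ ^ (2 * n)
        = (‖x‖ ^ n * ‖y‖ ^ n) * (‖x‖ ^ n * ‖y‖ ^ n) := by
      rw [two_mul, pow_add, pow_add]; ring
    rw [h1]
    exact mul_le_mul_of_nonneg_left hbn (by positivity)
  exact le_trans key (arith_aux _ _ _ _ (2 * n) c hc hA hB)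
end

section
/- Let T, S be bounded linear operators on a complex Hilbert space H, let r ≥ 1 be a real number, and c > 0. Then (1/(2(1+c)))·‖|T|^{2r} + |S|^{2r}‖·w(T*S)^r + (c/(4(1+c)))·‖|T|^{4r} + |S|^{4r}‖ + (c/(2(1+c)))·w(|S|^{2r}|T|^{2r}) ≤ (1/2)·‖|T|^{4r} + |S|^{4r}‖. -/
open scoped InnerProductSpace
open ContinuousLinearMap Finset

variable {H : Type*} [NormedAddCommGroup H] [InnerProductSpace ℂ H] [CompleteSpace H]

section Aux

open scoped NNReal
open RCLike

set_option linter.unusedSectionVars false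

lemma scalar_young' {t l r : ℝ} (ht : 0 ≤ t) (hl : 0 < l) (hr : 1 ≤ r) :
    t ≤ l ^ (1 - r) / r * t ^ r + l * (1 - 1/r) := by
  have hr0 : (0:ℝ) < r := lt_of_lt_of_le one_pos hr
  have hrne : r ≠ 0 := ne_of_gt hr0
  have hw2 : (0:ℝ) ≤ 1 - 1/r := by
    have : 1/r ≤ 1 := by rw [div_le_one hr0]; exact hr
    linarith
  have h := Real.geom_mean_le_arith_mean2_weighted
    (w₁ := 1/r) (w₂ := 1 - 1/r) (p₁ := t ^ r * l ^ (1 - r)) (p₂ := l)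
    (by positivity) hw2 (by positivity) hl.le (by ring)
  have hgm : (t ^ r * l ^ (1 - r)) ^ (1/r : ℝ) * l ^ (1 - 1/r : ℝ) = t := by
    rw [Real.mul_rpow (by positivity) (by positivity), ← Real.rpow_mul ht,
      ← Real.rpow_mul hl.le, mul_one_div, div_self hrne, Real.rpow_one,
      mul_assoc, ← Real.rpow_add hl,
      show (1-r)*(1/r) + (1-1/r) = 0 by field_simp; ring, Real.rpow_zero, mul_one]
  calc t = (t ^ r * l ^ (1 - r)) ^ (1/r : ℝ) * l ^ (1 - 1/r : ℝ) := hgm.symm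
    _ ≤ 1/r * (t ^ r * l ^ (1 - r)) + (1 - 1/r) * l := h
    _ = l ^ (1 - r) / r * t ^ r + l * (1 - 1/r) := by ring

lemma inner_nonneg_of_nonneg' {X : H →L[ℂ] H} (hX : 0 ≤ X) (x : H) :
    0 ≤ re ⟪X x, x⟫_ℂ :=
  ((ContinuousLinearMap.nonneg_iff_isPositive X).mp hX).re_inner_nonneg_left x

lemma inner_mono' {X Y : H →L[ℂ] H} (h : X ≤ Y) (x : H) :
    re ⟪X x, x⟫_ℂ ≤ re ⟪Y x, x⟫_ℂ := by
  have := inner_nonneg_of_nonneg' (sub_nonneg.mpr h) x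
  rw [ContinuousLinearMap.sub_apply, inner_sub_left, map_sub] at this
  linarith

lemma inner_smul_nn' (cc : ℝ≥0) (Y : H →L[ℂ] H) (x : H) :
    re ⟪(cc • Y) x, x⟫_ℂ = (cc : ℝ) * re ⟪Y x, x⟫_ℂ := by
  rw [ContinuousLinearMap.smul_apply, NNReal.smul_def,
    RCLike.real_smul_eq_coe_smul (K := ℂ), inner_smul_left]
  simp

lemma inner_one_self' (x : H) (hx : ‖x‖ = 1) : re ⟪(1 : H →L[ℂ] H) x, x⟫_ℂ = 1 := by
  simp [inner_self_eq_norm_sq, hx]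

lemma young_inner' {X : H →L[ℂ] H} (hX : 0 ≤ X) {r : ℝ} (hr : 1 ≤ r) {l : ℝ} (hl : 0 < l)
    (x : H) (hx : ‖x‖ = 1) :
    re ⟪X x, x⟫_ℂ ≤ l ^ (1 - r) / r * re ⟪CFC.rpow X r x, x⟫_ℂ + l * (1 - 1/r) := by
  have hr0 : (0:ℝ) < r := lt_of_lt_of_le one_pos hr
  have hw2 : (0:ℝ) ≤ 1 - 1/r := by
    have : 1/r ≤ 1 := by rw [div_le_one hr0]; exact hr
    linarith
  set c₁ : ℝ≥0 := ⟨l ^ (1 - r) / r, by positivity⟩ with hc₁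
  set c₂ : ℝ≥0 := ⟨l * (1 - 1/r), by positivity⟩ with hc₂
  have hcont1 : Continuous fun t : ℝ≥0 => t ^ (r:ℝ) := NNReal.continuous_rpow_const hr0.le
  have hop : X ≤ c₁ • CFC.rpow X r + c₂ • 1 := by
    have h2 : cfc (fun t : ℝ≥0 => c₁ * t ^ (r:ℝ) + c₂) X
        = c₁ • CFC.rpow X r + c₂ • 1 := by
      rw [cfc_add (R := ℝ≥0) (a := X) (fun t : ℝ≥0 => c₁ * t ^ (r:ℝ)) (fun _ => c₂)
          ((continuous_const.mul hcont1).continuousOn)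
          continuous_const.continuousOn,
        cfc_const_mul (R := ℝ≥0) _ _ X hcont1.continuousOn,
        cfc_const (R := ℝ≥0) _ X hX, Algebra.algebraMap_eq_smul_one]
      rfl
    nth_rewrite 1 [← cfc_id' ℝ≥0 X hX]
    rw [← h2]
    refine cfc_mono (fun t ht => ?_) (by fun_prop)
      (((continuous_const.mul hcont1).add continuous_const).continuousOn)
    have h3 := scalar_young' (t := (t:ℝ)) (l := l) (r := r) t.2 hl hr
    rw [← NNReal.coe_le_coe]
    push_cast [NNReal.coe_rpow]
    exact h3
  have h3 := inner_mono' hop x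
  rw [ContinuousLinearMap.add_apply, inner_add_left, map_add, inner_smul_nn', inner_smul_nn',
    inner_one_self' x hx] at h3
  rw [mul_one] at h3
  exact h3

lemma mccarthy' {X : H →L[ℂ] H} (hX : 0 ≤ X) {r : ℝ} (hr : 1 ≤ r)
    (x : H) (hx : ‖x‖ = 1) :
    re ⟪X x, x⟫_ℂ ≤ (re ⟪CFC.rpow X r x, x⟫_ℂ) ^ (1/r : ℝ) := by
  have hr0 : (0:ℝ) < r := lt_of_lt_of_le one_pos hr
  have hrne : r ≠ 0 := ne_of_gt hr0
  set v : ℝ := re ⟪CFC.rpow X r x, x⟫_ℂ with hv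
  have hv0 : 0 ≤ v := inner_nonneg_of_nonneg' CFC.rpow_nonneg x
  rcases eq_or_lt_of_le hv0 with hv0' | hv0'
  · have hle : re ⟪X x, x⟫_ℂ ≤ 0 := by
      refine le_of_forall_pos_le_add fun ε hε => ?_
      have h := young_inner' hX hr (l := min 1 ε) (lt_min one_pos hε) x hx
      rw [← hv, ← hv0', mul_zero] at h
      have h1 : min 1 ε * (1 - 1/r) ≤ ε := by
        have h2 : min 1 ε ≤ ε := min_le_right _ _
        have h3 : (0:ℝ) < min 1 ε := lt_min one_pos hε
        have h4 : 0 < 1/r := by positivity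
        nlinarith
      linarith
    calc re ⟪X x, x⟫_ℂ ≤ 0 := hle
      _ ≤ _ := Real.rpow_nonneg hv0 _
  · set l : ℝ := v ^ (1/r : ℝ) with hldef
    have hl : 0 < l := Real.rpow_pos_of_pos hv0' _
    have h := young_inner' hX hr hl x hx
    rw [← hv] at h
    have h1 : l ^ ((1:ℝ)-r) * v = l := by
      rw [hldef, ← Real.rpow_mul hv0]
      nth_rewrite 2 [← Real.rpow_one v]
      rw [← Real.rpow_add hv0']
      congr 1
      field_simp
      ring
    have h2 : l ^ ((1:ℝ)-r) / r * v = l / r := by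
      rw [div_mul_eq_mul_div, h1]
    have h3 : l / r + l * (1 - 1/r) = l := by field_simp; ring
    calc re ⟪X x, x⟫_ℂ ≤ l ^ (1-r) / r * v + l * (1 - 1/r) := h
      _ = l := by rw [h2]; exact h3

lemma numRadius_nonneg' (X : H →L[ℂ] H) : 0 ≤ numRadius X := by
  apply Real.sSup_nonneg
  rintro y ⟨x, hx, rfl⟩
  positivity

lemma numRadius_le' {X : H →L[ℂ] H} {b : ℝ} (hb : 0 ≤ b)
    (h : ∀ x : H, ‖x‖ = 1 → ‖⟪X x, x⟫_ℂ‖ ≤ b) : numRadius X ≤ b := by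
  apply Real.sSup_le _ hb
  rintro y ⟨x, hx, rfl⟩
  exact h x hx

lemma inner_re_le_norm' (Y : H →L[ℂ] H) (x : H) (hx : ‖x‖ = 1) :
    re ⟪Y x, x⟫_ℂ ≤ ‖Y‖ := by
  calc re ⟪Y x, x⟫_ℂ ≤ ‖⟪Y x, x⟫_ℂ‖ := RCLike.re_le_norm _
    _ ≤ ‖Y x‖ * ‖x‖ := norm_inner_le_norm _ _
    _ ≤ ‖Y‖ * ‖x‖ * ‖x‖ := by
        have := Y.le_opNorm x
        nlinarith [norm_nonneg (Y x), norm_nonneg x, norm_nonneg Y]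
    _ = ‖Y‖ := by rw [hx]; ring

lemma adjoint_mul_self_nonneg' (T : H →L[ℂ] H) : 0 ≤ adjoint T * T := by
  rw [← ContinuousLinearMap.star_eq_adjoint]
  exact star_mul_self_nonneg T

lemma opPow_opAbs' (T : H →L[ℂ] H) {cc d : ℝ} (hc : 0 ≤ cc) (hd : cc = 2*d) :
    opPow (opAbs T) cc = CFC.rpow (adjoint T * T) d := by
  have h0 := adjoint_mul_self_nonneg' T
  rw [opPow, opAbs, CFC.sqrt_eq_rpow]
  have := CFC.rpow_rpow_of_exponent_nonneg (adjoint T * T) (1/2) cc (by norm_num) hc h0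
  rw [show CFC.rpow ((adjoint T * T) ^ (1/2 : ℝ)) cc = ((adjoint T * T) ^ (1/2 : ℝ)) ^ cc from rfl,
    this, show (1/2) * cc = d by rw [hd]; ring]
  rfl

lemma rpow_mul_self' (X : H →L[ℂ] H) (hX : 0 ≤ X) {r : ℝ} (hr : 0 ≤ r) :
    CFC.rpow X r * CFC.rpow X r = CFC.rpow X (2*r) := by
  have h3 : (X ^ (r:ℝ)) ^ ((2:ℕ):ℝ) = X ^ (2*r : ℝ) := by
    rw [CFC.rpow_rpow_of_exponent_nonneg X r ((2:ℕ):ℝ) hr (by norm_num) hX,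
      show r * ((2:ℕ):ℝ) = 2*r by push_cast; ring]
  calc CFC.rpow X r * CFC.rpow X r = (X ^ (r:ℝ)) ^ (2:ℕ) := (sq _).symm
    _ = (X ^ (r:ℝ)) ^ ((2:ℕ):ℝ) := (CFC.rpow_natCast _ 2 CFC.rpow_nonneg).symm
    _ = X ^ (2*r : ℝ) := h3

lemma norm_sq_eq2' (T : H →L[ℂ] H) (x : H) :
    re ⟪(adjoint T * T) x, x⟫_ℂ = ‖T x‖^2 := by
  rw [ContinuousLinearMap.mul_apply, ContinuousLinearMap.adjoint_inner_left]
  simp [inner_self_eq_norm_sq]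
  norm_cast

lemma norm_sq_eq' {Y : H →L[ℂ] H} (hY : IsSelfAdjoint Y) (x : H) :
    re ⟪(Y * Y) x, x⟫_ℂ = ‖Y x‖^2 := by
  rw [ContinuousLinearMap.mul_apply]
  nth_rewrite 1 [← hY.adjoint_eq]
  rw [ContinuousLinearMap.adjoint_inner_left]
  simp [inner_self_eq_norm_sq]
  norm_cast

lemma prod_le_aux {a b N : ℝ} (ha0 : 0 ≤ a) (hb0 : 0 ≤ b) (hab : a + b ≤ N) :
    a * b ≤ (N/2)^2 := by nlinarith [sq_nonneg (a-b)]

lemma sq_le_aux {x y : ℝ} (hx : 0 ≤ x) (hy : 0 ≤ y) (h : x^2 ≤ y^2) : x ≤ y := by nlinarith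

lemma key1' (T S : H →L[ℂ] H) {r : ℝ} (hr : 1 ≤ r) :
    numRadius (adjoint T * S) ^ r
      ≤ ‖CFC.rpow (adjoint T * T) r + CFC.rpow (adjoint S * S) r‖ / 2 := by
  have hr0 : (0:ℝ) < r := lt_of_lt_of_le one_pos hr
  have hrne : r ≠ 0 := ne_of_gt hr0
  have hT0 := adjoint_mul_self_nonneg' T
  have hS0 := adjoint_mul_self_nonneg' S
  set N : ℝ := ‖CFC.rpow (adjoint T * T) r + CFC.rpow (adjoint S * S) r‖ with hN
  have hN2 : (0:ℝ) ≤ N/2 := by positivity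
  have hw1 : numRadius (adjoint T * S) ≤ (N/2) ^ (1/r : ℝ) := by
    apply numRadius_le' (Real.rpow_nonneg hN2 _)
    intro x hx
    have ha0 : 0 ≤ re ⟪CFC.rpow (adjoint T * T) r x, x⟫_ℂ :=
      inner_nonneg_of_nonneg' (CFC.rpow_nonneg (a := adjoint T * T) (y := r)) x
    have hb0 : 0 ≤ re ⟪CFC.rpow (adjoint S * S) r x, x⟫_ℂ :=
      inner_nonneg_of_nonneg' (CFC.rpow_nonneg (a := adjoint S * S) (y := r)) x
    set a : ℝ := re ⟪CFC.rpow (adjoint T * T) r x, x⟫_ℂ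
    set b : ℝ := re ⟪CFC.rpow (adjoint S * S) r x, x⟫_ℂ
    have hTr : ‖T x‖^2 ≤ a ^ (1/r : ℝ) := by
      have h := mccarthy' hT0 hr x hx
      rwa [norm_sq_eq2' T x] at h
    have hSr : ‖S x‖^2 ≤ b ^ (1/r : ℝ) := by
      have h := mccarthy' hS0 hr x hx
      rwa [norm_sq_eq2' S x] at h
    have hab : a + b ≤ N := by
      have h := inner_re_le_norm' (CFC.rpow (adjoint T * T) r + CFC.rpow (adjoint S * S) r) x hx
      rwa [ContinuousLinearMap.add_apply, inner_add_left, map_add] at h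
    have h1 : ‖⟪(adjoint T * S) x, x⟫_ℂ‖ ≤ ‖S x‖ * ‖T x‖ := by
      rw [ContinuousLinearMap.mul_apply, ContinuousLinearMap.adjoint_inner_left]
      exact norm_inner_le_norm _ _
    have e6 : ((N/2)^2 : ℝ) ^ (1/r : ℝ) = ((N/2) ^ (1/r : ℝ))^2 := by
      rw [← Real.rpow_natCast (N/2) 2, ← Real.rpow_natCast ((N/2) ^ (1/r:ℝ)) 2,
        ← Real.rpow_mul hN2, ← Real.rpow_mul hN2]
      congr 1
      ring
    have hsq : (‖S x‖ * ‖T x‖)^2 ≤ ((N/2) ^ (1/r : ℝ))^2 := by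
      have e2 : ‖T x‖^2 * ‖S x‖^2 ≤ a ^ (1/r:ℝ) * b ^ (1/r:ℝ) :=
        mul_le_mul hTr hSr (sq_nonneg _) (Real.rpow_nonneg ha0 _)
      have e3 : a ^ (1/r:ℝ) * b ^ (1/r:ℝ) = (a*b) ^ (1/r:ℝ) := (Real.mul_rpow ha0 hb0).symm
      have e4 : a*b ≤ (N/2)^2 := prod_le_aux ha0 hb0 hab
      have e5 : (a*b) ^ (1/r:ℝ) ≤ ((N/2)^2 : ℝ) ^ (1/r:ℝ) :=
        Real.rpow_le_rpow (by positivity) e4 (by positivity)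
      calc (‖S x‖ * ‖T x‖)^2 = ‖T x‖^2 * ‖S x‖^2 := by ring
        _ ≤ a ^ (1/r:ℝ) * b ^ (1/r:ℝ) := e2
        _ = (a*b) ^ (1/r:ℝ) := e3
        _ ≤ ((N/2)^2 : ℝ) ^ (1/r:ℝ) := e5
        _ = ((N/2) ^ (1/r : ℝ))^2 := e6
    have h2 : ‖S x‖ * ‖T x‖ ≤ (N/2) ^ (1/r : ℝ) :=
      sq_le_aux (mul_nonneg (norm_nonneg (S x)) (norm_nonneg (T x)))
        (Real.rpow_nonneg hN2 _) hsq
    exact h1.trans h2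
  have h := Real.rpow_le_rpow (numRadius_nonneg' _) hw1 hr0.le
  rwa [← Real.rpow_mul hN2, one_div, inv_mul_cancel₀ hrne, Real.rpow_one] at h

lemma key2' (P Q : H →L[ℂ] H) (hP : 0 ≤ P) (hQ : 0 ≤ Q) :
    numRadius (Q * P) ≤ ‖P * P + Q * Q‖ / 2 := by
  have hsaP : IsSelfAdjoint P := IsSelfAdjoint.of_nonneg hP
  have hsaQ : IsSelfAdjoint Q := IsSelfAdjoint.of_nonneg hQ
  apply numRadius_le' (by positivity)
  intro x hx
  have h1 : ⟪(Q * P) x, x⟫_ℂ = ⟪P x, Q x⟫_ℂ := by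
    rw [ContinuousLinearMap.mul_apply]
    nth_rewrite 1 [← hsaQ.adjoint_eq]
    rw [ContinuousLinearMap.adjoint_inner_left]
  have h2 : re ⟪(P * P + Q * Q) x, x⟫_ℂ ≤ ‖P * P + Q * Q‖ :=
    inner_re_le_norm' _ x hx
  rw [ContinuousLinearMap.add_apply, inner_add_left, map_add,
    norm_sq_eq' hsaP x, norm_sq_eq' hsaQ x] at h2
  calc ‖⟪(Q * P) x, x⟫_ℂ‖ = ‖⟪P x, Q x⟫_ℂ‖ := by rw [h1]
    _ ≤ ‖P x‖ * ‖Q x‖ := norm_inner_le_norm _ _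
    _ ≤ (‖P x‖^2 + ‖Q x‖^2) / 2 := by nlinarith [sq_nonneg (‖P x‖ - ‖Q x‖)]
    _ ≤ ‖P * P + Q * Q‖ / 2 := by linarith

lemma key3' (P Q : H →L[ℂ] H) (hP : 0 ≤ P) (hQ : 0 ≤ Q) :
    ‖P + Q‖^2 ≤ 2 * ‖P * P + Q * Q‖ := by
  have hsaP : IsSelfAdjoint P := IsSelfAdjoint.of_nonneg hP
  have hsaQ : IsSelfAdjoint Q := IsSelfAdjoint.of_nonneg hQ
  have h1 : ‖(P+Q)*(P+Q)‖ = ‖P+Q‖^2 := by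
    nth_rewrite 1 [← (hsaP.add hsaQ).star_eq]
    rw [CStarRing.norm_star_mul_self, sq]
  have hpos : 0 ≤ (P+Q)*(P+Q) := by
    nth_rewrite 1 [← (hsaP.add hsaQ).star_eq]
    exact star_mul_self_nonneg _
  have hposd : 0 ≤ (P-Q)*(P-Q) := by
    nth_rewrite 1 [← (hsaP.sub hsaQ).star_eq]
    exact star_mul_self_nonneg _
  have hle : (P+Q)*(P+Q) ≤ (P*P+Q*Q) + (P*P+Q*Q) := by
    have heq : (P+Q)*(P+Q) + (P-Q)*(P-Q) = (P*P+Q*Q) + (P*P+Q*Q) := by noncomm_ring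
    calc (P+Q)*(P+Q) ≤ (P+Q)*(P+Q) + (P-Q)*(P-Q) := le_add_of_nonneg_right hposd
      _ = _ := heq
  have h2 := CStarAlgebra.norm_le_norm_of_nonneg_of_le hpos hle
  rw [h1] at h2
  calc ‖P+Q‖^2 ≤ ‖(P*P+Q*Q) + (P*P+Q*Q)‖ := h2
    _ ≤ ‖P*P+Q*Q‖ + ‖P*P+Q*Q‖ := norm_add_le _ _
    _ = 2 * ‖P*P+Q*Q‖ := by ring

lemma final_aux' {N M w1 w2 c : ℝ} (hc : 0 < c) (hN0 : 0 ≤ N) (hM0 : 0 ≤ M)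
    (hw10 : 0 ≤ w1) (hw1 : w1 ≤ N/2) (hw2 : w2 ≤ M/2) (hNM : N^2 ≤ 2*M) :
    1/(2*(1+c)) * N * w1 + c/(4*(1+c)) * M + c/(2*(1+c)) * w2 ≤ 1/2 * M := by
  have h4 : N * w1 ≤ M := by nlinarith [mul_le_mul_of_nonneg_left hw1 hN0]
  have heq : 1/(2*(1+c)) * N * w1 + c/(4*(1+c)) * M + c/(2*(1+c)) * w2
      = (N*w1 + c/2*M + c*w2) / (2*(1+c)) := by
    field_simp
    ring
  rw [heq, div_le_iff₀ (by positivity)]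
  nlinarith [mul_le_mul_of_nonneg_left hw2 hc.le]

end Aux

theorem stmt9 (T S : H →L[ℂ] H) (r : ℝ) (hr : 1 ≤ r) (c : ℝ) (hc : 0 < c) :
    (1 / (2 * (1 + c))) * ‖opPow (opAbs T) (2 * r) + opPow (opAbs S) (2 * r)‖
        * numRadius (adjoint T * S) ^ r
      + (c / (4 * (1 + c))) * ‖opPow (opAbs T) (4 * r) + opPow (opAbs S) (4 * r)‖
      + (c / (2 * (1 + c))) * numRadius (opPow (opAbs S) (2 * r) * opPow (opAbs T) (2 * r))
      ≤ (1 / 2) * ‖opPow (opAbs T) (4 * r) + opPow (opAbs S) (4 * r)‖ := by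
  have hr0 : (0:ℝ) < r := lt_of_lt_of_le one_pos hr
  have hT0 := adjoint_mul_self_nonneg' T
  have hS0 := adjoint_mul_self_nonneg' S
  have hA2 : opPow (opAbs T) (2*r) = CFC.rpow (adjoint T * T) r :=
    opPow_opAbs' T (by positivity) rfl
  have hB2 : opPow (opAbs S) (2*r) = CFC.rpow (adjoint S * S) r :=
    opPow_opAbs' S (by positivity) rfl
  have hA4 : opPow (opAbs T) (4*r) = CFC.rpow (adjoint T * T) (2*r) :=
    opPow_opAbs' T (by positivity) (by ring)
  have hB4 : opPow (opAbs S) (4*r) = CFC.rpow (adjoint S * S) (2*r) :=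
    opPow_opAbs' S (by positivity) (by ring)
  have hPP : CFC.rpow (adjoint T * T) r * CFC.rpow (adjoint T * T) r
      = CFC.rpow (adjoint T * T) (2*r) := rpow_mul_self' _ hT0 hr0.le
  have hQQ : CFC.rpow (adjoint S * S) r * CFC.rpow (adjoint S * S) r
      = CFC.rpow (adjoint S * S) (2*r) := rpow_mul_self' _ hS0 hr0.le
  rw [hA2, hB2, hA4, hB4]
  have hk1 := key1' T S hr
  have hk2 := key2' (CFC.rpow (adjoint T * T) r) (CFC.rpow (adjoint S * S) r)
    CFC.rpow_nonneg CFC.rpow_nonneg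
  have hk3 := key3' (CFC.rpow (adjoint T * T) r) (CFC.rpow (adjoint S * S) r)
    CFC.rpow_nonneg CFC.rpow_nonneg
  rw [hPP, hQQ] at hk2 hk3
  exact final_aux' hc (norm_nonneg _) (norm_nonneg _)
    (Real.rpow_nonneg (numRadius_nonneg' _) _)
    (by linarith [hk1]) (by linarith [hk2]) (by linarith [hk3])
end

section
/- Let T, S be bounded linear operators on a complex Hilbert space H. Then w(S*T)² ≤ (1/3)·‖|T|² + |S|²‖·w(T*S) + (1/6)·‖|T|⁴ + |S|⁴‖. -/
open scoped InnerProductSpace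
open ContinuousLinearMap Finset

variable {H : Type*} [NormedAddCommGroup H] [InnerProductSpace ℂ H] [CompleteSpace H]

set_option synthInstance.maxHeartbeats 1000000
set_option maxHeartbeats 1000000

lemma aux_inner_le_norm (A : H →L[ℂ] H) {x : H} (hx : ‖x‖ = 1) : ‖⟪A x, x⟫_ℂ‖ ≤ ‖A‖ := by
  calc ‖⟪A x, x⟫_ℂ‖ ≤ ‖A x‖ * ‖x‖ := norm_inner_le_norm _ _
    _ ≤ ‖A‖ * ‖x‖ * ‖x‖ := by gcongr; exact A.le_opNorm x
    _ = ‖A‖ := by rw [hx]; ring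

lemma aux_bdd (A : H →L[ℂ] H) :
    BddAbove ((fun x : H => ‖⟪A x, x⟫_ℂ‖) '' {x : H | ‖x‖ = 1}) := by
  refine ⟨‖A‖, ?_⟩
  rintro y ⟨x, hx, rfl⟩
  exact aux_inner_le_norm A hx

lemma aux_nonneg (A : H →L[ℂ] H) : 0 ≤ numRadius A := by
  apply Real.sSup_nonneg
  rintro y ⟨x, hx, rfl⟩
  exact norm_nonneg _

lemma aux_sq_opAbs (T : H →L[ℂ] H) : opAbs T ^ 2 = adjoint T * T := by
  have h : (0:H →L[ℂ] H) ≤ adjoint T * T := by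
    rw [← star_eq_adjoint]; exact star_mul_self_nonneg T
  exact CFC.sq_sqrt _ h

lemma aux_inner_sq (T : H →L[ℂ] H) (x : H) :
    (⟪(adjoint T * T) x, x⟫_ℂ).re = ‖T x‖ ^ 2 := by
  rw [mul_apply_eq_comp, adjoint_inner_left, inner_self_eq_norm_sq_to_K]
  norm_cast

theorem stmt10 (T S : H →L[ℂ] H) :
    numRadius (adjoint S * T) ^ 2
      ≤ (1 / 3) * ‖opAbs T ^ 2 + opAbs S ^ 2‖ * numRadius (adjoint T * S)
        + (1 / 6) * ‖opAbs T ^ 4 + opAbs S ^ 4‖ := by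
  set q := numRadius (adjoint T * S) with hq_def
  have hq0 : 0 ≤ q := aux_nonneg _
  set C : ℝ := (1 / 3) * ‖opAbs T ^ 2 + opAbs S ^ 2‖ * q
        + (1 / 6) * ‖opAbs T ^ 4 + opAbs S ^ 4‖ with hC_def
  have hC0 : 0 ≤ C := by
    have := norm_nonneg (opAbs T ^ 2 + opAbs S ^ 2)
    have := norm_nonneg (opAbs T ^ 4 + opAbs S ^ 4)
    positivity
  -- pointwise bound
  have key : ∀ x : H, ‖x‖ = 1 → ‖⟪(adjoint S * T) x, x⟫_ℂ‖ ^ 2 ≤ C := by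
    intro x hx
    set p := ‖⟪(adjoint S * T) x, x⟫_ℂ‖ with hp_def
    have hp0 : 0 ≤ p := norm_nonneg _
    have hinner : ⟪(adjoint S * T) x, x⟫_ℂ = ⟪T x, S x⟫_ℂ := by
      rw [mul_apply_eq_comp, adjoint_inner_left]
    -- p ≤ q
    have hpq : p ≤ q := by
      have h1 : ⟪(adjoint T * S) x, x⟫_ℂ = ⟪S x, T x⟫_ℂ := by
        rw [mul_apply_eq_comp, adjoint_inner_left]
      have h2 : ‖⟪(adjoint T * S) x, x⟫_ℂ‖ = p := by
        rw [h1, hp_def, hinner, ← inner_conj_symm (T x) (S x), RCLike.norm_conj]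
      rw [← h2]
      exact le_csSup (aux_bdd _) ⟨x, hx, rfl⟩
    set a := ‖T x‖ ^ 2 with ha_def
    set b := ‖S x‖ ^ 2 with hb_def
    have ha0 : 0 ≤ a := sq_nonneg _
    have hb0 : 0 ≤ b := sq_nonneg _
    -- Cauchy-Schwarz
    have hcs : p ^ 2 ≤ a * b := by
      rw [hp_def, hinner]
      calc ‖⟪T x, S x⟫_ℂ‖ ^ 2 ≤ (‖T x‖ * ‖S x‖) ^ 2 := by
            gcongr
            exact norm_inner_le_norm _ _
        _ = a * b := by rw [ha_def, hb_def]; ring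
    -- a + b ≤ ‖|T|² + |S|²‖
    have hab : a + b ≤ ‖opAbs T ^ 2 + opAbs S ^ 2‖ := by
      have h1 : (⟪(opAbs T ^ 2 + opAbs S ^ 2) x, x⟫_ℂ).re = a + b := by
        rw [add_apply, inner_add_left, Complex.add_re, aux_sq_opAbs, aux_sq_opAbs,
          aux_inner_sq, aux_inner_sq]
      calc a + b = (⟪(opAbs T ^ 2 + opAbs S ^ 2) x, x⟫_ℂ).re := h1.symm
        _ ≤ ‖⟪(opAbs T ^ 2 + opAbs S ^ 2) x, x⟫_ℂ‖ := Complex.re_le_norm _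
        _ ≤ ‖opAbs T ^ 2 + opAbs S ^ 2‖ := aux_inner_le_norm _ hx
    -- a² + b² ≤ ‖|T|⁴ + |S|⁴‖
    have habsq : a ^ 2 + b ^ 2 ≤ ‖opAbs T ^ 4 + opAbs S ^ 4‖ := by
      have key4 : ∀ R : H →L[ℂ] H, (‖R x‖ ^ 2) ^ 2
          ≤ (⟪(opAbs R ^ 4) x, x⟫_ℂ).re := by
        intro R
        set A := adjoint R * R with hA_def
        have h4 : opAbs R ^ 4 = A * A := by
          rw [show (4:ℕ) = 2 * 2 from rfl, pow_mul, aux_sq_opAbs, sq]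
        have hsa : adjoint A = A := by
          rw [hA_def, ← star_eq_adjoint, star_mul, star_eq_adjoint, ← star_eq_adjoint,
            star_star, star_eq_adjoint]
        have hAx : (⟪(opAbs R ^ 4) x, x⟫_ℂ).re = ‖A x‖ ^ 2 := by
          rw [h4, mul_apply_eq_comp]
          nth_rewrite 1 [← hsa]
          rw [adjoint_inner_left, inner_self_eq_norm_sq_to_K]
          norm_cast
        have hle : ‖R x‖ ^ 2 ≤ ‖A x‖ := by
          calc ‖R x‖ ^ 2 = (⟪A x, x⟫_ℂ).re := (aux_inner_sq R x).symm
            _ ≤ ‖⟪A x, x⟫_ℂ‖ := Complex.re_le_norm _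
            _ ≤ ‖A x‖ * ‖x‖ := norm_inner_le_norm _ _
            _ = ‖A x‖ := by rw [hx, mul_one]
        rw [hAx]
        exact pow_le_pow_left₀ (sq_nonneg _) hle 2
      have hTsum : a ^ 2 + b ^ 2 ≤ (⟪(opAbs T ^ 4 + opAbs S ^ 4) x, x⟫_ℂ).re := by
        rw [add_apply, inner_add_left, Complex.add_re]
        exact add_le_add (key4 T) (key4 S)
      calc a ^ 2 + b ^ 2 ≤ (⟪(opAbs T ^ 4 + opAbs S ^ 4) x, x⟫_ℂ).re := hTsum
        _ ≤ ‖⟪(opAbs T ^ 4 + opAbs S ^ 4) x, x⟫_ℂ‖ := Complex.re_le_norm _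
        _ ≤ ‖opAbs T ^ 4 + opAbs S ^ 4‖ := aux_inner_le_norm _ hx
    -- scalar inequality
    have h2p : 2 * p ≤ a + b := by
      nlinarith [sq_nonneg (a - b), sq_nonneg (a + b), mul_nonneg ha0 hb0]
    have hnorm2 : 0 ≤ ‖opAbs T ^ 2 + opAbs S ^ 2‖ := norm_nonneg _
    rw [hC_def]
    nlinarith [mul_nonneg (sub_nonneg.2 hpq) hp0,
      mul_nonneg (sub_nonneg.2 hab) hq0,
      mul_nonneg (by linarith : (0:ℝ) ≤ a + b - 2 * p) hq0,
      sq_nonneg (a - b), hcs, habsq]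
  -- conclude
  have hsup : numRadius (adjoint S * T) ≤ Real.sqrt C := by
    apply Real.sSup_le
    · rintro y ⟨x, hx, rfl⟩
      exact (Real.le_sqrt (norm_nonneg _) hC0).2 (key x hx)
    · exact Real.sqrt_nonneg _
  have h0 : 0 ≤ numRadius (adjoint S * T) := aux_nonneg _
  calc numRadius (adjoint S * T) ^ 2 ≤ Real.sqrt C ^ 2 := by gcongr
    _ = C := Real.sq_sqrt hC0
end
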